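/- arXiv:2005.13807 — 2 statements merged into one kernel-verified Lean document; each statement's English description precedes it below -/
import Mathlib

section
/- Let x₀ ∈ ℝⁿ be nonzero, a ∈ ℝⁿ, ρ > 0, M := (2x₀x₀ᵀ + ρI)⁻¹, and b₂ < b₁. Define λ := (ρ·aᵀMx₀ − b₁)/(x₀ᵀMx₀) if ρ·aᵀMx₀ − b₁ > 0; λ := (ρ·aᵀMx₀ − b₂)/(x₀ᵀMx₀) if ρ·aᵀMx₀ − b₂ < 0; and λ := 0 otherwise. Then Φ* := M(ρa − λx₀) is feasible, i.e., b₂ ≤ (Φ*)ᵀx₀ ≤ b₁. -/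
/-!
`M` is the inverse of the positive definite matrix `2 x₀ x₀ᵀ + ρ I`, hence symmetric positive
definite, so `(Φ*)ᵀ x₀ = ρ aᵀ M x₀ - λ x₀ᵀ M x₀` with `x₀ᵀ M x₀ > 0`. As a function of `λ` this
is affine with nonzero slope, and the three cases defining `λ` place it at `b₁`, at `b₂`, or
leave the already feasible value `ρ aᵀ M x₀` untouched.
-/

open Matrix

/-- The multiplier `λ` of the paper, with `p = ρ aᵀ M x₀` and `q = x₀ᵀ M x₀`. -/
noncomputable def clipMultiplier {K : Type*} [Field K] [LinearOrder K] (p q b₁ b₂ : K) : K :=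
  if p - b₁ > 0 then (p - b₁) / q else if p - b₂ < 0 then (p - b₂) / q else 0

theorem sub_clipMultiplier_mul_mem_Icc {K : Type*} [Field K] [LinearOrder K]
    [IsStrictOrderedRing K] {p q b₁ b₂ : K} (hq : q ≠ 0) (hb : b₂ ≤ b₁) :
    p - clipMultiplier p q b₁ b₂ * q ∈ Set.Icc b₂ b₁ := by
  unfold clipMultiplier
  split_ifs with h₁ h₂
  · rw [div_mul_cancel₀ _ hq, sub_sub_cancel]
    exact ⟨hb, le_rfl⟩
  · rw [div_mul_cancel₀ _ hq, sub_sub_cancel]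
    exact ⟨le_rfl, hb⟩
  · constructor <;> linarith

theorem Matrix.IsSymm.mulVec_dotProduct {n R : Type*} [Fintype n] [CommSemiring R]
    {M : Matrix n n R} (hM : M.IsSymm) (v w : n → R) :
    M *ᵥ v ⬝ᵥ w = v ⬝ᵥ M *ᵥ w := by
  rw [dotProduct_comm, dotProduct_mulVec, ← mulVec_transpose, hM.eq, dotProduct_comm]

theorem Matrix.posDef_smul_vecMulVec_self_add_smul_one {n : Type*} [Fintype n] [DecidableEq n]
    (x : n → ℝ) {c ρ : ℝ} (hc : 0 ≤ c) (hρ : 0 < ρ) :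
    (c • vecMulVec x x + ρ • (1 : Matrix n n ℝ)).PosDef := by
  have hx : (vecMulVec x x).PosSemidef := star_trivial x ▸ posSemidef_vecMulVec_self_star x
  exact PosDef.posSemidef_add (hx.smul hc) (PosDef.one.smul hρ)

theorem explicit_solution_feasible
    (n : ℕ) (x₀ a : Fin n → ℝ) (hx₀ : x₀ ≠ 0) (ρ b₁ b₂ : ℝ) (hρ : 0 < ρ) (hb : b₂ < b₁)
    (M : Matrix (Fin n) (Fin n) ℝ)
    (hM : M = ((2 : ℝ) • Matrix.vecMulVec x₀ x₀ + ρ • (1 : Matrix (Fin n) (Fin n) ℝ))⁻¹)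
    (lam : ℝ)
    (hlam : lam =
      if ρ * (a ⬝ᵥ M.mulVec x₀) - b₁ > 0 then
        (ρ * (a ⬝ᵥ M.mulVec x₀) - b₁) / (x₀ ⬝ᵥ M.mulVec x₀)
      else if ρ * (a ⬝ᵥ M.mulVec x₀) - b₂ < 0 then
        (ρ * (a ⬝ᵥ M.mulVec x₀) - b₂) / (x₀ ⬝ᵥ M.mulVec x₀)
      else 0)
    (Φs : Fin n → ℝ)
    (hΦs : Φs = M.mulVec (ρ • a - lam • x₀)) :
    b₂ ≤ Φs ⬝ᵥ x₀ ∧ Φs ⬝ᵥ x₀ ≤ b₁ := by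
  have hMpos : M.PosDef := hM ▸ (posDef_smul_vecMulVec_self_add_smul_one x₀ zero_le_two hρ).inv
  have hq : 0 < x₀ ⬝ᵥ M *ᵥ x₀ := by simpa using hMpos.dotProduct_mulVec_pos hx₀
  have hMsymm : M.IsSymm := isHermitian_iff_isSymm.mp hMpos.isHermitian
  have hΦx₀ : Φs ⬝ᵥ x₀ = ρ * (a ⬝ᵥ M *ᵥ x₀) - lam * (x₀ ⬝ᵥ M *ᵥ x₀) := by
    rw [hΦs, hMsymm.mulVec_dotProduct, sub_dotProduct, smul_dotProduct, smul_dotProduct,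
      smul_eq_mul, smul_eq_mul]
  rw [hΦx₀, hlam]
  exact sub_clipMultiplier_mul_mem_Icc hq.ne' hb.le
end

section
/- Let Z, 𝒜, ℬ be as in the finite-horizon SLS setup and K block-lower-triangular. Define Φ_x := (I − Z(𝒜 + ℬK))⁻¹ and Φ_u := KΦ_x. Then the pair (Φ_x, Φ_u) satisfies the affine SLS constraint (I − Z𝒜)Φ_x − ZℬΦ_u = I, and conversely, if block-lower-triangular matrices (Φ_x, Φ_u) satisfy (I − Z𝒜)Φ_x − ZℬΦ_u = I with Φ_x invertible, then K := Φ_u Φ_x⁻¹ yields (I − Z(𝒜 + ℬK))⁻¹ = Φ_x and K(I − Z(𝒜 + ℬK))⁻¹ = Φ_u. -/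
open Matrix

/-- Block lower triangular (causal) operator: block (i,j) vanishes when j > i. -/
def BlockLowerTri {T m p : ℕ}
    (M : Matrix (Fin (T + 1) × Fin m) (Fin (T + 1) × Fin p) ℝ) : Prop :=
  ∀ a b, (a.1 : ℕ) < (b.1 : ℕ) → M a b = 0

/-- Block-downshift operator: identity blocks on the first block subdiagonal. -/
def downshift (T n : ℕ) : Matrix (Fin (T + 1) × Fin n) (Fin (T + 1) × Fin n) ℝ :=
  fun a b => if (a.1 : ℕ) = (b.1 : ℕ) + 1 ∧ a.2 = b.2 then 1 else 0

/-- blkdiag(A, ..., A, 0). -/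
def blkDiag {T n p : ℕ} (A : Matrix (Fin n) (Fin p) ℝ) :
    Matrix (Fin (T + 1) × Fin n) (Fin (T + 1) × Fin p) ℝ :=
  fun a b => if a.1 = b.1 ∧ (a.1 : ℕ) < T then A a.2 b.2 else 0

/-!
`Z(𝒜 + ℬK)` is strictly block lower triangular, hence nilpotent, so `I - Z(𝒜 + ℬK)` is invertible.
Both directions then rest on the identity `(I - Z(𝒜 + ℬK))X = (I - Z𝒜)X - Zℬ(KX)`: with
`X = Φx` and `KΦx = Φu` it turns the affine constraint into `(I - Z(𝒜 + ℬK))Φx = I`.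
-/

namespace Matrix

theorem one_sub_mul_add_mul_mul {m q r R : Type*} [Fintype m] [Fintype q] [DecidableEq m]
    [Ring R] (Z A : Matrix m m R) (B : Matrix m q R) (K : Matrix q m R) (X : Matrix m r R) :
    (1 - Z * (A + B * K)) * X = (1 - Z * A) * X - Z * B * (K * X) := by
  simp only [Matrix.sub_mul, Matrix.mul_add, Matrix.add_mul, Matrix.mul_assoc]
  abel

variable {ι R : Type*} [Fintype ι] [DecidableEq ι] [Semiring R]

theorem pow_apply_eq_zero_of_strictLower (lev : ι → ℕ) {M : Matrix ι ι R}
    (hM : ∀ i j, lev i ≤ lev j → M i j = 0) (k : ℕ) :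
    ∀ i j, lev i < lev j + k → (M ^ k) i j = 0 := by
  induction k with
  | zero =>
    intro i j hij
    exact one_apply_ne fun h => by subst h; omega
  | succ k ih =>
    intro i j hij
    rw [pow_succ', mul_apply]
    refine Finset.sum_eq_zero fun l _ => ?_
    by_cases hil : lev i ≤ lev l
    · rw [hM i l hil, zero_mul]
    · rw [ih l j (by omega), mul_zero]

theorem pow_eq_zero_of_strictLower (lev : ι → ℕ) {N : ℕ} (hlev : ∀ i, lev i < N)
    {M : Matrix ι ι R} (hM : ∀ i j, lev i ≤ lev j → M i j = 0) : M ^ N = 0 := by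
  ext i j
  exact pow_apply_eq_zero_of_strictLower lev hM N i j ((hlev i).trans_le (Nat.le_add_left _ _))

end Matrix

section BlockLowerTri

variable {T m p q : ℕ}

theorem BlockLowerTri.add {M N : Matrix (Fin (T + 1) × Fin m) (Fin (T + 1) × Fin p) ℝ}
    (hM : BlockLowerTri M) (hN : BlockLowerTri N) : BlockLowerTri (M + N) := by
  intro a b hab
  rw [Matrix.add_apply, hM a b hab, hN a b hab, add_zero]

theorem BlockLowerTri.mul {M : Matrix (Fin (T + 1) × Fin m) (Fin (T + 1) × Fin p) ℝ}
    {N : Matrix (Fin (T + 1) × Fin p) (Fin (T + 1) × Fin q) ℝ}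
    (hM : BlockLowerTri M) (hN : BlockLowerTri N) : BlockLowerTri (M * N) := by
  intro a b hab
  rw [Matrix.mul_apply]
  refine Finset.sum_eq_zero fun c _ => ?_
  by_cases hac : (a.1 : ℕ) < c.1
  · rw [hM a c hac, zero_mul]
  · rw [hN c b (by omega), mul_zero]

theorem blockLowerTri_blkDiag (A : Matrix (Fin m) (Fin p) ℝ) :
    BlockLowerTri (blkDiag (T := T) A) := by
  intro a b hab
  refine if_neg fun ⟨h, _⟩ => ?_
  rw [h] at hab
  exact lt_irrefl _ hab

theorem downshift_mul_apply_eq_zero {M : Matrix (Fin (T + 1) × Fin m) (Fin (T + 1) × Fin p) ℝ}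
    (hM : BlockLowerTri M) (a : Fin (T + 1) × Fin m) (b : Fin (T + 1) × Fin p)
    (hab : (a.1 : ℕ) ≤ b.1) : (downshift T m * M) a b = 0 := by
  rw [Matrix.mul_apply]
  refine Finset.sum_eq_zero fun c _ => ?_
  by_cases hac : (a.1 : ℕ) = c.1 + 1 ∧ a.2 = c.2
  · rw [hM c b (by omega), mul_zero]
  · simp only [downshift, if_neg hac, zero_mul]

theorem isNilpotent_downshift_mul {M : Matrix (Fin (T + 1) × Fin m) (Fin (T + 1) × Fin m) ℝ}
    (hM : BlockLowerTri M) : IsNilpotent (downshift T m * M) :=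
  ⟨T + 1, Matrix.pow_eq_zero_of_strictLower (fun a => a.1) (fun a => a.1.isLt)
    (downshift_mul_apply_eq_zero hM)⟩

end BlockLowerTri

theorem sls_parameterization
    (T n p : ℕ) (A : Matrix (Fin n) (Fin n) ℝ) (B : Matrix (Fin n) (Fin p) ℝ) :
    (∀ K : Matrix (Fin (T + 1) × Fin p) (Fin (T + 1) × Fin n) ℝ,
      BlockLowerTri K →
      ∀ Φx Φu,
        Φx = (1 - downshift T n * (blkDiag A + blkDiag B * K))⁻¹ →
        Φu = K * Φx →
        (1 - downshift T n * blkDiag A) * Φx - (downshift T n * blkDiag B : Matrix (Fin (T + 1) × Fin n) (Fin (T + 1) × Fin p) ℝ) * Φu = 1) ∧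
    (∀ (Φx : Matrix (Fin (T + 1) × Fin n) (Fin (T + 1) × Fin n) ℝ)
       (Φu : Matrix (Fin (T + 1) × Fin p) (Fin (T + 1) × Fin n) ℝ),
      BlockLowerTri Φx → BlockLowerTri Φu →
      (1 - downshift T n * blkDiag A) * Φx - (downshift T n * blkDiag B : Matrix (Fin (T + 1) × Fin n) (Fin (T + 1) × Fin p) ℝ) * Φu = 1 →
      IsUnit Φx.det →
      ∀ K, K = Φu * Φx⁻¹ →
        (1 - downshift T n * (blkDiag A + blkDiag B * K))⁻¹ = Φx ∧
        K * (1 - downshift T n * (blkDiag A + blkDiag B * K))⁻¹ = Φu) := by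
  -- The statement's products with `blkDiag _` elaborate through a definitionally equal
  -- `CStarMatrix` instance, so `one_sub_mul_add_mul_mul` is applied by unification, not `rw`.
  constructor
  · rintro K hK Φx Φu rfl rfl
    have hunit : IsUnit (1 - downshift T n * (blkDiag A + blkDiag B * K)) :=
      (isNilpotent_downshift_mul
        ((blockLowerTri_blkDiag A).add ((blockLowerTri_blkDiag B).mul hK))).isUnit_one_sub
    exact (Matrix.one_sub_mul_add_mul_mul _ _ _ _ _).symm.trans
      (Matrix.mul_nonsing_inv _ ((Matrix.isUnit_iff_isUnit_det _).mp hunit))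
  · rintro Φx Φu - - hSLS hdet K rfl
    have hKΦx : Φu * Φx⁻¹ * Φx = Φu := by
      rw [Matrix.mul_assoc, Matrix.nonsing_inv_mul _ hdet, Matrix.mul_one]
    have hinv : (1 - downshift T n * (blkDiag A + blkDiag B * (Φu * Φx⁻¹)))⁻¹ = Φx :=
      Matrix.inv_eq_right_inv ((Matrix.one_sub_mul_add_mul_mul _ _ _ _ _).trans
        (by rw [hKΦx]; exact hSLS))
    exact ⟨hinv, by rw [hinv, hKΦx]⟩
end
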